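/- The root configuration R(I) := {{r(I,i) : i ∈ I}} (as a multiset) characterizes the facet I among all facets of the spherical subword complex SC(Q): two distinct facets of SC(Q) have distinct root configurations. -/

import Mathlib

open scoped RealInnerProductSpace Classical

namespace SubwordBrick

variable {B : Type} [DecidableEq B] [Fintype B]
variable {W : Type} [Group W]
variable {M : CoxeterMatrix B} (cs : CoxeterSystem M W)
variable {V : Type} [NormedAddCommGroup V] [InnerProductSpace ℝ V]
variable (pi : W →* (V ≃ₗᵢ[ℝ] V)) (α : B → V)

/-- The set of positive roots: roots (elements of the `W`-orbit of the simple roots) that are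
nonnegative linear combinations of the simple roots. -/
def PosRoot : Set V :=
  {v | (∃ (w : W) (b : B), v = pi w (α b)) ∧
    ∃ c : B → ℝ, (∀ b, 0 ≤ c b) ∧ v = ∑ b, c b • α b}

/-- `pi` together with the simple roots `α` is the standard geometric representation of the
Coxeter system `cs` on the Euclidean space `V`. -/
structure IsGeometricRep : Prop where
  injective : Function.Injective pi
  root_ne_zero : ∀ b, α b ≠ 0
  indep : LinearIndependent ℝ α
  span_top : Submodule.span ℝ (Set.range α) = ⊤
  simple_apply : ∀ b (v : V),
    pi (cs.simple b) v = v - (2 * ⟪α b, v⟫ / ⟪α b, α b⟫) • α b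
  inner_eq : ∀ b b', b ≠ b' →
    ⟪α b, α b'⟫ = -(‖α b‖ * ‖α b'‖) * Real.cos (Real.pi / (M b b' : ℝ))

/-- A word is reduced if its length equals the Coxeter length of its product. -/
def IsReducedWord (l : List B) : Prop := cs.length (cs.wordProd l) = l.length

/-- The Demazure product of a word. -/
noncomputable def demazure (Q : List B) : W :=
  Q.foldl (fun w b => if cs.length (w * cs.simple b) = cs.length w + 1
    then w * cs.simple b else w) 1

/-- The word formed by the letters of `Q` at positions not in `I`. -/
def complementWord (Q : List B) (I : Finset (Fin Q.length)) : List B :=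
  ((List.finRange Q.length).filter (fun z => z ∉ I)).map Q.get

/-- `I` is a facet of the subword complex `SC(Q)` (with respect to `w0`): the complement of `I` in
`Q` is a reduced expression of `w0`. -/
def IsFacet (w0 : W) (Q : List B) (I : Finset (Fin Q.length)) : Prop :=
  IsReducedWord cs (complementWord Q I) ∧ cs.wordProd (complementWord Q I) = w0

/-- The product `σ_I^{[1,k-1]}` of the letters of `Q` at positions before `k` that are not
in `I` (positions are 0-indexed here). -/
def sigmaBefore (Q : List B) (I : Finset (Fin Q.length)) (k : ℕ) : W :=
  cs.wordProd (((List.finRange Q.length).filter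
    (fun z => z ∉ I ∧ (z : ℕ) < k)).map Q.get)

/-- The root function `r(I,k) = σ_I^{[1,k-1]} (α_{q_k})`. -/
def rootFn (Q : List B) (I : Finset (Fin Q.length)) (k : Fin Q.length) : V :=
  pi (sigmaBefore cs Q I (k : ℕ)) (α (Q.get k))

/-- The weight function `w(I,k) = σ_I^{[1,k-1]} (ω_{q_k})`. -/
def weightFn (ω : B → V) (Q : List B) (I : Finset (Fin Q.length)) (k : Fin Q.length) : V :=
  pi (sigmaBefore cs Q I (k : ℕ)) (ω (Q.get k))

/-- The brick vector of a facet. -/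
def brick (ω : B → V) (Q : List B) (I : Finset (Fin Q.length)) : V :=
  ∑ k : Fin Q.length, weightFn cs pi ω Q I k

/-- The root configuration of a facet, as a multiset. -/
def rootConf (Q : List B) (I : Finset (Fin Q.length)) : Multiset V :=
  I.val.map (fun i => rootFn cs pi α Q I i)

/-- The root configuration of `I` is a linear basis of `V`. -/
def IsBasisConfig (Q : List B) (I : Finset (Fin Q.length)) : Prop :=
  LinearIndependent ℝ (fun i : I => rootFn cs pi α Q I (i : Fin Q.length)) ∧
    Submodule.span ℝ (Set.range (fun i : I => rootFn cs pi α Q I (i : Fin Q.length))) = ⊤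

/-- The word `Q` is realizing: the root configuration of every facet is a basis of `V`. -/
def IsRealizing (w0 : W) (Q : List B) : Prop :=
  ∀ I, IsFacet cs w0 Q I → IsBasisConfig cs pi α Q I

/-- Facets `I` and `J` are adjacent, related by the flip exchanging `i` and `j`. -/
def Adjacent (Q : List B) (I J : Finset (Fin Q.length)) (i j : Fin Q.length) : Prop :=
  i ∈ I ∧ j ∈ J ∧ i ≠ j ∧ I.erase i = J.erase j

/-- The inversion set `inv(w) = Φ⁺ ∩ w(Φ⁻)`. -/
def invSet (w : W) : Set V :=
  {v | v ∈ PosRoot pi α ∧ -((pi w).symm v) ∈ PosRoot pi α}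



/-! ### Auxiliary development -/

section Aux

set_option linter.unusedSectionVars false
set_option maxHeartbeats 1000000

open CoxeterSystem

/-- Nonnegative combinations of the simple roots. -/
def IsPos (v : V) : Prop := ∃ c : B → ℝ, (∀ b, 0 ≤ c b) ∧ v = ∑ b, c b • α b

variable {cs pi α}

lemma sum_pair_eq {b c : B} (hbc : b ≠ c) (x1 x2 : ℝ) :
    ∑ z, (if z = b then x1 else if z = c then x2 else 0) • α z = x1 • α b + x2 • α c := by
  have : ∀ z ∈ Finset.univ,
      (if z = b then x1 else if z = c then x2 else 0) • α z
      = (if z = b then x1 • α z else 0) + (if z = c then x2 • α z else 0) := by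
    intro z _
    by_cases h1 : z = b
    · subst h1; simp [hbc]
    · by_cases h2 : z = c
      · subst h2; simp [Ne.symm hbc]
      · simp [h1, h2]
  rw [Finset.sum_congr rfl this, Finset.sum_add_distrib]
  simp

lemma isPos_pair {b c : B} (hbc : b ≠ c) {x1 x2 : ℝ} (h1 : 0 ≤ x1) (h2 : 0 ≤ x2) :
    IsPos α (x1 • α b + x2 • α c) := by
  refine ⟨fun z => if z = b then x1 else if z = c then x2 else 0, fun z => by
    dsimp only; split <;> try split
    all_goals simp [h1, h2], (sum_pair_eq hbc x1 x2).symm⟩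

lemma isPos_simple (b : B) : IsPos α (α b) := by
  refine ⟨fun z => if z = b then 1 else 0, fun z => by dsimp only; split <;> simp, ?_⟩
  rw [Finset.sum_congr rfl (g := fun z => if z = b then (1:ℝ) • α z else 0)
    (fun z _ => by dsimp only; split <;> simp)]
  simp

lemma isPos_combo {a1 a2 : ℝ} {v1 v2 : V} (h1 : 0 ≤ a1) (h2 : 0 ≤ a2)
    (p1 : IsPos α v1) (p2 : IsPos α v2) : IsPos α (a1 • v1 + a2 • v2) := by
  obtain ⟨c1, hc1, rfl⟩ := p1
  obtain ⟨c2, hc2, rfl⟩ := p2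
  refine ⟨fun z => a1 * c1 z + a2 * c2 z,
    fun z => add_nonneg (mul_nonneg h1 (hc1 z)) (mul_nonneg h2 (hc2 z)), ?_⟩
  rw [Finset.smul_sum, Finset.smul_sum, ← Finset.sum_add_distrib]
  congr 1; ext z; rw [add_smul, smul_smul, smul_smul]

lemma not_isPos_neg (h : IsGeometricRep cs pi α) {v : V} (hv : v ≠ 0) (h1 : IsPos α v) :
    ¬ IsPos α (-v) := by
  rintro ⟨d, hd, hdv⟩
  obtain ⟨c, hc, hcv⟩ := h1
  have hsum : ∑ z, (c z + d z) • α z = 0 := by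
    have : ∑ z, (c z + d z) • α z = (∑ z, c z • α z) + ∑ z, d z • α z := by
      rw [← Finset.sum_add_distrib]; congr 1; ext z; rw [add_smul]
    rw [this, ← hcv, ← hdv, add_neg_cancel]
  have hzero := Fintype.linearIndependent_iff.mp h.indep _ hsum
  apply hv
  rw [hcv]
  have : ∀ z, c z = 0 := fun z => by
    have := hzero z
    have h1 := hc z
    have h2 := hd z
    linarith
  simp [this]

lemma pi_root_ne_zero (w : W) (b : B) (h : IsGeometricRep cs pi α) : pi w (α b) ≠ 0 := by
  simp only [ne_eq, LinearIsometryEquiv.map_eq_zero_iff]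
  exact h.root_ne_zero b

lemma pi_simple_self (h : IsGeometricRep cs pi α) (b : B) :
    pi (cs.simple b) (α b) = -(α b) := by
  have hne : ⟪α b, α b⟫ ≠ 0 := inner_self_ne_zero.mpr (h.root_ne_zero b)
  rw [h.simple_apply b (α b), mul_div_assoc, div_self hne]
  module

lemma pi_conj_apply (h : IsGeometricRep cs pi α) (w : W) (b : B) (v : V) :
    pi (w * cs.simple b * w⁻¹) v
      = v - (2 * ⟪pi w (α b), v⟫ / ⟪pi w (α b), pi w (α b)⟫) • pi w (α b) := by
  have hre : ∀ (x : W) (u : V), pi x (pi x⁻¹ u) = u := by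
    intro x u
    have : pi x * pi x⁻¹ = 1 := by rw [← map_mul, mul_inv_cancel, map_one]
    calc pi x (pi x⁻¹ u) = (pi x * pi x⁻¹) u := rfl
    _ = u := by rw [this]; rfl
  have h1 : ⟪α b, pi w⁻¹ v⟫ = ⟪pi w (α b), v⟫ := by
    conv_rhs => rw [← hre w v]
    rw [LinearIsometryEquiv.inner_map_map]
  have h2 : ⟪pi w (α b), pi w (α b)⟫ = ⟪α b, α b⟫ := by
    rw [LinearIsometryEquiv.inner_map_map]
  rw [map_mul, map_mul]
  calc pi w (pi (cs.simple b) (pi w⁻¹ v))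
      = pi w (pi w⁻¹ v - (2 * ⟪α b, pi w⁻¹ v⟫ / ⟪α b, α b⟫) • α b) := by
        rw [h.simple_apply b]
    _ = v - (2 * ⟪pi w (α b), v⟫ / ⟪pi w (α b), pi w (α b)⟫) • pi w (α b) := by
        rw [map_sub, LinearIsometryEquiv.map_smul, hre, h1, h2]

lemma conj_eq (h : IsGeometricRep cs pi α) {w : W} {b c : B}
    (hroot : pi w (α b) = -(α c)) : w * cs.simple b = cs.simple c * w := by
  have key : w * cs.simple b * w⁻¹ = cs.simple c := by
    apply h.injective
    apply LinearIsometryEquiv.ext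
    intro v
    rw [pi_conj_apply h w b v, hroot, h.simple_apply c v]
    rw [inner_neg_neg, inner_neg_left, smul_neg]
    rw [show (2 * -⟪α c, v⟫ / ⟪α c, α c⟫) = -(2 * ⟪α c, v⟫ / ⟪α c, α c⟫) by ring]
    rw [neg_smul, neg_neg]
  calc w * cs.simple b = w * cs.simple b * w⁻¹ * w := by group
  _ = cs.simple c * w := by rw [key]

lemma two_le_M (h : IsGeometricRep cs pi α) {b c : B} (hbc : b ≠ c) : 2 ≤ M b c := by
  rcases Nat.lt_or_ge (M b c) 2 with hlt | hge
  · interval_cases hm : M b c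
    · -- M b c = 0
      exfalso
      have hin : ⟪α b, α c⟫ = -(‖α b‖ * ‖α c‖) := by
        have := h.inner_eq b c hbc
        rw [hm] at this
        simpa using this
      have hu : (‖α c‖ • α b + ‖α b‖ • α c) = 0 := by
        rw [← inner_self_eq_zero (𝕜 := ℝ)]
        rw [real_inner_add_add_self]
        rw [real_inner_smul_left, real_inner_smul_right, real_inner_smul_left,
          real_inner_smul_right, real_inner_smul_left, real_inner_smul_right]
        rw [hin, real_inner_self_eq_norm_sq, real_inner_self_eq_norm_sq]
        ring
      have := Fintype.linearIndependent_iff.mp h.indep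
        (fun z => if z = b then ‖α c‖ else if z = c then ‖α b‖ else 0)
        (by rw [sum_pair_eq hbc]; exact hu) b
      simp at this
      exact h.root_ne_zero c (by simpa using this)
    · -- M b c = 1
      exact absurd hm (M.off_diagonal b c hbc)
  · exact hge

lemma trig_formula (b c : B) (E F : V) (t : ℝ) (hsin : Real.sin t ≠ 0)
    (hE : pi (cs.simple b) E = -E) (hF : pi (cs.simple c) F = -F)
    (hEc : pi (cs.simple c) E = E + (2 * Real.cos t) • F)
    (hFb : pi (cs.simple b) F = F + (2 * Real.cos t) • E) :
    ∀ r : ℕ, pi (cs.wordProd (alternatingWord b c r)) E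
      = (Real.sin ((r + 1) * t) / Real.sin t) • (if Even r then E else F)
      + (Real.sin (r * t) / Real.sin t) • (if Even r then F else E) := by
  intro r
  induction r with
  | zero =>
    show pi (cs.wordProd []) E = _
    rw [CoxeterSystem.wordProd_nil, map_one]
    norm_num
    rw [div_self hsin]
    module
  | succ r ih =>
    have key : Real.sin (((r:ℝ)+2)*t) = 2*Real.cos t*Real.sin (((r:ℝ)+1)*t)
        - Real.sin ((r:ℝ)*t) := by
      have e1 : ((r:ℝ)+2)*t = ((r:ℝ)+1)*t + t := by ring
      have e2 : (r:ℝ)*t = ((r:ℝ)+1)*t - t := by ring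
      rw [e1, e2, Real.sin_add, Real.sin_sub]; ring
    rw [CoxeterSystem.alternatingWord_succ', CoxeterSystem.wordProd_cons, map_mul]
    show pi _ (pi _ E) = _
    rw [ih]
    rcases Nat.even_or_odd r with he | ho
    · rw [if_pos he, if_pos he, if_pos he,
        if_neg (by simp [Nat.even_add_one, he] : ¬ Even (r+1)),
        if_neg (by simp [Nat.even_add_one, he] : ¬ Even (r+1))]
      rw [map_add, LinearIsometryEquiv.map_smul, LinearIsometryEquiv.map_smul, hEc, hF]
      push_cast
      rw [show ((r:ℝ) + 1 + 1) * t = ((r:ℝ)+2)*t by ring, key]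
      match_scalars <;> field_simp <;> ring
    · have hne : ¬ Even r := Nat.not_even_iff_odd.mpr ho
      rw [if_neg hne, if_neg hne, if_neg hne,
        if_pos (by simp [Nat.even_add_one, hne] : Even (r+1)),
        if_pos (by simp [Nat.even_add_one, hne] : Even (r+1))]
      rw [map_add, LinearIsometryEquiv.map_smul, LinearIsometryEquiv.map_smul, hFb, hE]
      push_cast
      rw [show ((r:ℝ) + 1 + 1) * t = ((r:ℝ)+2)*t by ring, key]
      match_scalars <;> field_simp <;> ring

lemma alt_pair (h : IsGeometricRep cs pi α) {b c : B} (hbc : b ≠ c) {r : ℕ}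
    (hr : r + 1 ≤ M b c) :
    ∃ c1 c2 : ℝ, 0 ≤ c1 ∧ 0 ≤ c2 ∧
      pi (cs.wordProd (alternatingWord b c r)) (α b) = c1 • α b + c2 • α c := by
  have hm2 := two_le_M h hbc
  have hmpos : (0:ℝ) < (M b c : ℝ) := by
    have : (2:ℝ) ≤ (M b c : ℝ) := by exact_mod_cast hm2
    linarith
  set t := Real.pi / (M b c : ℝ) with ht_def
  have ht0 : 0 < t := div_pos Real.pi_pos hmpos
  have htpi : t < Real.pi := by
    rw [ht_def, div_lt_iff₀ hmpos]
    have : (2:ℝ) ≤ (M b c : ℝ) := by exact_mod_cast hm2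
    nlinarith [Real.pi_pos]
  have hsin : 0 < Real.sin t := Real.sin_pos_of_pos_of_lt_pi ht0 htpi
  have hsinne : Real.sin t ≠ 0 := ne_of_gt hsin
  have hnb : ‖α b‖ ≠ 0 := norm_ne_zero_iff.mpr (h.root_ne_zero b)
  have hnc : ‖α c‖ ≠ 0 := norm_ne_zero_iff.mpr (h.root_ne_zero c)
  have hsinnn : ∀ k : ℕ, k ≤ M b c → 0 ≤ Real.sin ((k:ℝ) * t) := by
    intro k hk
    apply Real.sin_nonneg_of_nonneg_of_le_pi
    · positivity
    · calc (k:ℝ) * t ≤ (M b c : ℝ) * t := by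
            apply mul_le_mul_of_nonneg_right _ ht0.le
            exact_mod_cast hk
      _ = Real.pi := by rw [ht_def, mul_div_cancel₀ _ (ne_of_gt hmpos)]
  set E := ‖α b‖⁻¹ • α b with hE_def
  set F := ‖α c‖⁻¹ • α c with hF_def
  have hibc : ⟪α b, α c⟫ = -(‖α b‖ * ‖α c‖) * Real.cos t := h.inner_eq b c hbc
  have hicb : ⟪α c, α b⟫ = -(‖α c‖ * ‖α b‖) * Real.cos t := by
    have := h.inner_eq c b hbc.symm
    rwa [M.symmetric c b] at this
  have hEr : pi (cs.simple b) E = -E := by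
    rw [hE_def, LinearIsometryEquiv.map_smul, pi_simple_self h b, smul_neg]
  have hFr : pi (cs.simple c) F = -F := by
    rw [hF_def, LinearIsometryEquiv.map_smul, pi_simple_self h c, smul_neg]
  have hEc : pi (cs.simple c) E = E + (2 * Real.cos t) • F := by
    rw [hE_def, LinearIsometryEquiv.map_smul, h.simple_apply c (α b), hicb,
      real_inner_self_eq_norm_sq, hF_def]
    match_scalars <;> field_simp <;> ring
  have hFb : pi (cs.simple b) F = F + (2 * Real.cos t) • E := by
    rw [hF_def, LinearIsometryEquiv.map_smul, h.simple_apply b (α c), hibc,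
      real_inner_self_eq_norm_sq, hE_def]
    match_scalars <;> field_simp <;> ring
  have tf := trig_formula b c E F t hsinne hEr hFr hEc hFb r
  have hab : α b = ‖α b‖ • E := by
    rw [hE_def, smul_smul, mul_inv_cancel₀ hnb, one_smul]
  have happ : pi (cs.wordProd (alternatingWord b c r)) (α b)
      = ‖α b‖ • ((Real.sin (((r:ℝ) + 1) * t) / Real.sin t) • (if Even r then E else F)
        + (Real.sin ((r:ℝ) * t) / Real.sin t) • (if Even r then F else E)) := by
    conv_lhs => rw [hab]
    rw [LinearIsometryEquiv.map_smul, tf]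
  have hA : 0 ≤ Real.sin (((r:ℝ) + 1) * t) / Real.sin t := by
    apply div_nonneg _ hsin.le
    have := hsinnn (r+1) hr
    push_cast at this
    exact this
  have hB : 0 ≤ Real.sin ((r:ℝ) * t) / Real.sin t :=
    div_nonneg (hsinnn r (by omega)) hsin.le
  rcases Nat.even_or_odd r with he | ho
  · rw [if_pos he, if_pos he] at happ
    have : pi (cs.wordProd (alternatingWord b c r)) (α b)
        = (Real.sin (((r:ℝ) + 1) * t) / Real.sin t) • α b
          + (Real.sin ((r:ℝ) * t) / Real.sin t * ‖α b‖ * ‖α c‖⁻¹) • α c := by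
      rw [happ, hE_def, hF_def]
      match_scalars <;> field_simp <;> ring
    exact ⟨_, _, hA, by positivity, this⟩
  · have hne : ¬ Even r := Nat.not_even_iff_odd.mpr ho
    rw [if_neg hne, if_neg hne] at happ
    have : pi (cs.wordProd (alternatingWord b c r)) (α b)
        = (Real.sin ((r:ℝ) * t) / Real.sin t) • α b
          + (Real.sin (((r:ℝ) + 1) * t) / Real.sin t * ‖α b‖ * ‖α c‖⁻¹) • α c := by
      rw [happ, hE_def, hF_def]
      match_scalars <;> field_simp <;> ring
    exact ⟨_, _, hB, by positivity, this⟩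

lemma canonical_form (h : IsGeometricRep cs pi α) {b c : B} (hbc : b ≠ c) :
    ∀ u ∈ Subgroup.closure {cs.simple b, cs.simple c},
      ∃ r ≤ M b c, u = cs.wordProd (alternatingWord b c r)
        ∨ u = cs.wordProd (alternatingWord c b r) := by
  have hm2 := two_le_M h hbc
  have braid : cs.wordProd (alternatingWord b c (M b c))
      = cs.wordProd (alternatingWord c b (M b c)) := by
    have := cs.wordProd_braidWord_eq b c
    simp only [CoxeterSystem.braidWord] at this
    rwa [M.symmetric c b] at this
  have core : ∀ x y : B, x ≠ y →
      cs.wordProd (alternatingWord x y (M x y))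
        = cs.wordProd (alternatingWord y x (M x y)) →
      ∀ k : ℕ, k + 1 ≤ M x y → ∀ d : B, (d = x ∨ d = y) →
      ∃ r' ≤ M x y, cs.simple d * cs.wordProd (alternatingWord x y (k+1))
          = cs.wordProd (alternatingWord x y r')
        ∨ cs.simple d * cs.wordProd (alternatingWord x y (k+1))
          = cs.wordProd (alternatingWord y x r') := by
    intro x y hxy hbr k hk d hd
    have hsucc := CoxeterSystem.alternatingWord_succ' x y k
    rcases Nat.even_or_odd k with hpar | hpar
    · rw [if_pos hpar] at hsucc
      rcases hd with rfl | rfl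
      · -- head is y, d = x : extend (or braid then cancel)
        by_cases hkm : k + 2 ≤ M d y
        · refine ⟨k+2, hkm, Or.inl ?_⟩
          have hsucc2 := CoxeterSystem.alternatingWord_succ' d y (k+1)
          rw [if_neg (by simp [Nat.even_add_one, hpar])] at hsucc2
          rw [hsucc2, CoxeterSystem.wordProd_cons]
        · have hkm' : k + 1 = M d y := by omega
          refine ⟨k, by omega, Or.inr ?_⟩
          rw [hkm', hbr]
          have hsucc3 := CoxeterSystem.alternatingWord_succ' y d k
          rw [if_pos hpar] at hsucc3
          rw [← hkm', hsucc3, CoxeterSystem.wordProd_cons,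
            cs.simple_mul_simple_cancel_left]
      · -- head is y = d : cancel
        refine ⟨k, by omega, Or.inl ?_⟩
        rw [hsucc, CoxeterSystem.wordProd_cons, cs.simple_mul_simple_cancel_left]
    · rw [if_neg (Nat.not_even_iff_odd.mpr hpar)] at hsucc
      rcases hd with rfl | rfl
      · -- head is x = d : cancel
        refine ⟨k, by omega, Or.inl ?_⟩
        rw [hsucc, CoxeterSystem.wordProd_cons, cs.simple_mul_simple_cancel_left]
      · -- head is x, d = y : extend (or braid then cancel)
        by_cases hkm : k + 2 ≤ M x d
        · refine ⟨k+2, hkm, Or.inl ?_⟩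
          have hsucc2 := CoxeterSystem.alternatingWord_succ' x d (k+1)
          rw [if_pos (by simp [Nat.even_add_one, Nat.not_even_iff_odd.mpr hpar])] at hsucc2
          rw [hsucc2, CoxeterSystem.wordProd_cons]
        · have hkm' : k + 1 = M x d := by omega
          refine ⟨k, by omega, Or.inr ?_⟩
          rw [hkm', hbr]
          have hsucc3 := CoxeterSystem.alternatingWord_succ' d x k
          rw [if_neg (Nat.not_even_iff_odd.mpr hpar)] at hsucc3
          rw [← hkm', hsucc3, CoxeterSystem.wordProd_cons,
            cs.simple_mul_simple_cancel_left]
  have mulstep : ∀ d : B, (d = b ∨ d = c) → ∀ u : W,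
      (∃ r ≤ M b c, u = cs.wordProd (alternatingWord b c r)
        ∨ u = cs.wordProd (alternatingWord c b r)) →
      (∃ r ≤ M b c, cs.simple d * u = cs.wordProd (alternatingWord b c r)
        ∨ cs.simple d * u = cs.wordProd (alternatingWord c b r)) := by
    rintro d hd u ⟨r, hrm, hform⟩
    rcases r with _ | k
    · have hu1 : u = 1 := by
        rcases hform with h' | h' <;>
          simpa [show ∀ z z' : B, alternatingWord z z' 0 = [] from fun _ _ => rfl,
            CoxeterSystem.wordProd_nil] using h'
      subst hu1
      rw [mul_one]
      rcases hd with rfl | rfl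
      · exact ⟨1, by omega, Or.inr (by
          rw [show alternatingWord c d 1 = [d] from rfl, cs.wordProd_singleton])⟩
      · exact ⟨1, by omega, Or.inl (by
          rw [show alternatingWord b d 1 = [d] from rfl, cs.wordProd_singleton])⟩
    · rcases hform with hL | hR
      · rw [hL]
        exact core b c hbc braid k hrm d hd
      · rw [hR]
        have hmc : M c b = M b c := M.symmetric c b
        obtain ⟨r', hr', hh⟩ := core c b hbc.symm
          (by rw [hmc]; exact braid.symm) k (by rw [hmc]; exact hrm) d hd.symm
        exact ⟨r', by rw [← hmc]; exact hr', hh.symm⟩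
  intro u hu
  induction hu using Subgroup.closure_induction_left with
  | one => exact ⟨0, by omega, Or.inl (by
      rw [show alternatingWord b c 0 = [] from rfl, CoxeterSystem.wordProd_nil])⟩
  | mul_left x hx u hu ih =>
    simp only [Set.mem_insert_iff, Set.mem_singleton_iff] at hx
    rcases hx with rfl | rfl
    · exact mulstep b (Or.inl rfl) u ih
    · exact mulstep c (Or.inr rfl) u ih
  | inv_mul_cancel x hx u hu ih =>
    simp only [Set.mem_insert_iff, Set.mem_singleton_iff] at hx
    rcases hx with rfl | rfl
    · rw [cs.inv_simple]; exact mulstep b (Or.inl rfl) u ih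
    · rw [cs.inv_simple]; exact mulstep c (Or.inr rfl) u ih

theorem ascent_isPos (h : IsGeometricRep cs pi α) :
    ∀ (w : W) (b : B), cs.length (w * cs.simple b) = cs.length w + 1 →
      IsPos α (pi w (α b)) := by
  suffices H : ∀ N : ℕ, ∀ (w : W) (b : B), cs.length (w * cs.simple b) ≤ N →
      cs.length (w * cs.simple b) = cs.length w + 1 → IsPos α (pi w (α b)) by
    intro w b hasc
    exact H _ w b le_rfl hasc
  intro N
  induction N with
  | zero => intro w b hN hasc; omega
  | succ N IH =>
    intro w b hN hasc
    rcases Nat.lt_or_ge (cs.length (w * cs.simple b)) (N+1) with hlt | hge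
    · exact IH w b (by omega) hasc
    have hNe : cs.length (w * cs.simple b) = N + 1 := le_antisymm hN hge
    have hlw : cs.length w = N := by omega
    by_cases hw1 : w = 1
    · subst hw1
      rw [map_one]
      exact isPos_simple b
    have hNpos : 1 ≤ N := by
      rcases Nat.eq_zero_or_pos N with h0 | h1
      · exact absurd (cs.length_eq_zero_iff.mp (by omega)) hw1
      · exact h1
    obtain ⟨c, hcdesc⟩ := cs.exists_rightDescent_of_ne_one hw1
    have hcdesc' : cs.length (w * cs.simple c) < cs.length w := hcdesc
    have hbc : b ≠ c := by
      rintro rfl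
      omega
    have hm2 := two_le_M h hbc
    have hwc : cs.length (w * cs.simple c) + 1 = cs.length w :=
      (cs.length_mul_simple w c).resolve_left (by omega)
    -- the coset minimizer
    set G := Subgroup.closure ({cs.simple b, cs.simple c} : Set W) with hG
    set Aset : Set W :=
      {v' | v'⁻¹ * w ∈ G ∧ cs.length v' + cs.length (v'⁻¹ * w) = cs.length w} with hAset
    have hsbG : cs.simple b ∈ G := Subgroup.subset_closure (by left; rfl)
    have hscG : cs.simple c ∈ G := Subgroup.subset_closure (by right; rfl)
    have hwcA : w * cs.simple c ∈ Aset := by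
      have hre : (w * cs.simple c)⁻¹ * w = (cs.simple c)⁻¹ := by group
      constructor
      · show (w * cs.simple c)⁻¹ * w ∈ G
        rw [hre, cs.inv_simple]
        exact hscG
      · show cs.length _ + cs.length ((w * cs.simple c)⁻¹ * w) = cs.length w
        rw [hre, cs.inv_simple, cs.length_simple]
        omega
    obtain ⟨v, hvA, hvmin⟩ : ∃ v ∈ Aset, ∀ v' ∈ Aset, cs.length v ≤ cs.length v' := by
      obtain ⟨v, ⟨hvA, hveq⟩⟩ := Nat.sInf_mem
        (⟨_, ⟨_, hwcA, rfl⟩⟩ : {n | ∃ v' ∈ Aset, cs.length v' = n}.Nonempty)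
      exact ⟨v, hvA, fun v' hv' => by rw [hveq]; exact Nat.sInf_le ⟨v', hv', rfl⟩⟩
    set u := v⁻¹ * w with hu_def
    have hvw : v * u = w := by rw [hu_def]; group
    have huG : u ∈ G := hvA.1
    have hsum : cs.length v + cs.length u = cs.length w := hvA.2
    have hvle : cs.length v + 1 ≤ cs.length w := by
      have := hvmin _ hwcA
      omega
    have hnodesc : ∀ d : B, (d = b ∨ d = c) →
        cs.length (v * cs.simple d) = cs.length v + 1 := by
      intro d hd
      rcases cs.length_mul_simple v d with hgood | hbad
      · exact hgood
      exfalso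
      have hsdG : cs.simple d ∈ G := by
        rcases hd with rfl | rfl
        · exact hsbG
        · exact hscG
      have hform : (v * cs.simple d)⁻¹ * w = cs.simple d * u := by
        rw [hu_def]
        rw [mul_inv_rev, cs.inv_simple, mul_assoc]
      have hv'G : (v * cs.simple d)⁻¹ * w ∈ G := by
        rw [hform]
        exact mul_mem hsdG huG
      have hlen1 : cs.length ((v * cs.simple d)⁻¹ * w) ≤ cs.length u + 1 := by
        rw [hform]
        rcases cs.length_simple_mul u d with h' | h' <;> omega
      have hge' : cs.length w ≤ cs.length (v * cs.simple d)
          + cs.length ((v * cs.simple d)⁻¹ * w) := by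
        conv_lhs => rw [show w = (v * cs.simple d) * ((v * cs.simple d)⁻¹ * w) by group]
        exact cs.length_mul_le _ _
      have hA' : v * cs.simple d ∈ Aset := ⟨hv'G, by omega⟩
      have := hvmin _ hA'
      omega
    have hub : cs.length (u * cs.simple b) = cs.length u + 1 := by
      have h1 : cs.length (w * cs.simple b) ≤ cs.length v + cs.length (u * cs.simple b) := by
        conv_lhs => rw [show w * cs.simple b = v * (u * cs.simple b) by
          rw [← hvw]; group]
        exact cs.length_mul_le _ _
      rcases cs.length_mul_simple u b with h' | h' <;> omega
    obtain ⟨r0, hr0m, hform0⟩ := canonical_form h hbc u huG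
    have braid : cs.wordProd (alternatingWord b c (M b c))
        = cs.wordProd (alternatingWord c b (M b c)) := by
      have := cs.wordProd_braidWord_eq b c
      simp only [CoxeterSystem.braidWord] at this
      rwa [M.symmetric c b] at this
    have cases2 : (∃ r, r + 1 ≤ M b c ∧ u = cs.wordProd (alternatingWord b c r))
        ∨ (∃ r, 1 ≤ r ∧ r ≤ M b c ∧ u = cs.wordProd (alternatingWord c b r)) := by
      rcases hform0 with hL | hR
      · by_cases hrs : r0 + 1 ≤ M b c
        · exact Or.inl ⟨r0, hrs, hL⟩
        · refine Or.inr ⟨M b c, by omega, le_rfl, ?_⟩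
          rw [hL, show r0 = M b c by omega, braid]
      · rcases r0 with _ | k
        · exact Or.inl ⟨0, by omega, by rw [hR]; rfl⟩
        · exact Or.inr ⟨k+1, by omega, hr0m, hR⟩
    rcases cases2 with ⟨r, hrs, hGood⟩ | ⟨r, hr1, hrm2, hBad⟩
    · -- good case
      obtain ⟨c1, c2, hc1, hc2, heq⟩ := alt_pair h hbc hrs
      rw [← hGood] at heq
      have hsplit : pi w (α b) = c1 • pi v (α b) + c2 • pi v (α c) := by
        conv_lhs => rw [← hvw]
        rw [map_mul]
        show pi v (pi u (α b)) = _
        rw [heq, map_add, LinearIsometryEquiv.map_smul, LinearIsometryEquiv.map_smul]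
      rw [hsplit]
      refine isPos_combo hc1 hc2 (IH v b ?_ (hnodesc b (Or.inl rfl)))
        (IH v c ?_ (hnodesc c (Or.inr rfl)))
      · rw [hnodesc b (Or.inl rfl)]; omega
      · rw [hnodesc c (Or.inr rfl)]; omega
    · -- bad case
      exfalso
      have hdecomp : u = cs.wordProd (alternatingWord b c (r-1)) * cs.simple b := by
        have hcc : alternatingWord c b r = (alternatingWord b c (r-1)).concat b := by
          have := CoxeterSystem.alternatingWord_succ c b (r-1)
          rwa [show r - 1 + 1 = r by omega] at this
        rw [hBad, hcc, cs.wordProd_concat]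
      set g := cs.wordProd (alternatingWord b c (r-1)) with hg_def
      have hval : pi u (α b) = -(pi g (α b)) := by
        rw [hdecomp, map_mul]
        show pi g (pi (cs.simple b) (α b)) = _
        rw [pi_simple_self h b, map_neg]
      obtain ⟨c1, c2, hc1, hc2, hpair⟩ := alt_pair h hbc
        (show (r-1) + 1 ≤ M b c by omega)
      have hgPos : IsPos α (pi g (α b)) := by
        rw [hg_def, hpair]
        exact isPos_pair hbc hc1 hc2
      have hgne : pi g (α b) ≠ 0 := pi_root_ne_zero _ _ h
      by_cases hv1 : v = 1
      · -- u = w : the dihedral case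
        have huw : u = w := by rw [hu_def, hv1, inv_one, one_mul]
        by_cases hrsmall2 : r + 1 ≤ M b c
        · -- r ≤ m - 1 : use the descent at c
          obtain ⟨d1, d2, hd1, hd2, hqair⟩ := alt_pair h hbc.symm
            (show r + 1 ≤ M c b by rw [M.symmetric c b]; exact hrsmall2)
          have hwc_pos : IsPos α (pi w (α c)) := by
            rw [← huw, hBad, hqair]
            exact isPos_pair hbc.symm hd1 hd2
          have hwc_ne : pi w (α c) ≠ 0 := pi_root_ne_zero _ _ h
          have hih := IH (w * cs.simple c) c
            (by rw [cs.simple_mul_simple_cancel_right]; omega)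
            (by rw [cs.simple_mul_simple_cancel_right]; omega)
          have hneg : pi (w * cs.simple c) (α c) = -(pi w (α c)) := by
            rw [map_mul]
            show pi w (pi (cs.simple c) (α c)) = _
            rw [pi_simple_self h c, map_neg]
          rw [hneg] at hih
          exact not_isPos_neg h hwc_ne hwc_pos hih
        · -- r = M b c : descending chain argument
          have hrM : r = M b c := by omega
          have hwform : w = cs.wordProd (alternatingWord b c (M b c)) := by
            rw [← huw, hBad, hrM, braid]
          have hwsb : w * cs.simple b = cs.wordProd (alternatingWord b c (M b c - 1)) := by
            have hcc : alternatingWord c b (M b c) = (alternatingWord b c (M b c - 1)).concat b := by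
              have := CoxeterSystem.alternatingWord_succ c b (M b c - 1)
              rwa [show M b c - 1 + 1 = M b c by omega] at this
            rw [← huw, hBad, hrM, hcc, cs.wordProd_concat,
              cs.simple_mul_simple_cancel_right]
          have hlwm : N + 1 ≤ M b c - 2 + 2 ∧ N ≤ M b c - 2 := by
            have hle := cs.length_wordProd_le (alternatingWord b c (M b c - 1))
            rw [← hwsb, CoxeterSystem.length_alternatingWord] at hle
            omega
          have hwsc : w * cs.simple c = cs.wordProd (alternatingWord c b (M b c - 1)) := by
            have hcc : alternatingWord b c (M b c) = (alternatingWord c b (M b c - 1)).concat c := by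
              have := CoxeterSystem.alternatingWord_succ b c (M b c - 1)
              rwa [show M b c - 1 + 1 = M b c by omega] at this
            rw [hwform, hcc, cs.wordProd_concat, cs.simple_mul_simple_cancel_right]
          have AUX : ∀ s : ℕ, s ≤ M b c - 1 → ∀ x y : B,
              ((x = b ∧ y = c) ∨ (x = c ∧ y = b)) →
              cs.length (cs.wordProd (alternatingWord x y s)) + (M b c - s) = N → False := by
            intro s
            induction s with
            | zero =>
              intro _ x y _ hinv
              rw [show alternatingWord x y 0 = [] from rfl, CoxeterSystem.wordProd_nil,
                cs.length_one] at hinv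
              omega
            | succ k ihk =>
              intro hsle x y horient hinv
              have hyx : y ≠ x := by
                rcases horient with ⟨rfl, rfl⟩ | ⟨rfl, rfl⟩
                · exact hbc.symm
                · exact hbc
              have hMyx : M y x = M b c := by
                rcases horient with ⟨rfl, rfl⟩ | ⟨rfl, rfl⟩
                · exact M.symmetric y x
                · rfl
              have hconcat : alternatingWord x y (k+1) = (alternatingWord y x k).concat y :=
                CoxeterSystem.alternatingWord_succ x y k
              have hxs : cs.wordProd (alternatingWord x y (k+1))
                  = cs.wordProd (alternatingWord y x k) * cs.simple y := by
                rw [hconcat, cs.wordProd_concat]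
              obtain ⟨e1, e2, he1, he2, hepair⟩ := alt_pair h hyx
                (show k + 1 ≤ M y x by omega)
              have hposg : IsPos α (pi (cs.wordProd (alternatingWord y x k)) (α y)) := by
                rw [hepair]
                exact isPos_pair hyx he1 he2
              have hneg : pi (cs.wordProd (alternatingWord x y (k+1))) (α y)
                  = -(pi (cs.wordProd (alternatingWord y x k)) (α y)) := by
                rw [hxs, map_mul]
                show pi _ (pi (cs.simple y) (α y)) = _
                rw [pi_simple_self h y, map_neg]
              rcases cs.length_mul_simple (cs.wordProd (alternatingWord x y (k+1))) y
                with hasc2 | hdesc2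
              · have hih := IH (cs.wordProd (alternatingWord x y (k+1))) y
                  (by omega) hasc2
                rw [hneg] at hih
                exact not_isPos_neg h (pi_root_ne_zero _ _ h) hposg hih
              · have hgx : cs.wordProd (alternatingWord x y (k+1)) * cs.simple y
                    = cs.wordProd (alternatingWord y x k) := by
                  rw [hxs, cs.simple_mul_simple_cancel_right]
                refine ihk (by omega) y x ?_ ?_
                · tauto
                · rw [← hgx]
                  omega
          refine AUX (M b c - 1) le_rfl c b (Or.inr ⟨rfl, rfl⟩) ?_
          rw [← hwsc]
          omega
      · -- v ≠ 1
        have hvpos : 1 ≤ cs.length v := by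
          rcases Nat.eq_zero_or_pos (cs.length v) with h0 | h1
          · exact absurd (cs.length_eq_zero_iff.mp h0) hv1
          · exact h1
        have hih := IH u b (by omega) hub
        rw [hval] at hih
        exact not_isPos_neg h hgne hgPos hih

lemma filter_split {n : ℕ} (p : Fin n → Bool) (t : ℕ) :
    ∀ (l : List (Fin n)), l.Pairwise (· < ·) →
    l.filter p = (l.filter fun z => p z ∧ z.val < t) ++ (l.filter fun z => p z ∧ t ≤ z.val) := by
  intro l hl
  induction l with
  | nil => simp
  | cons a l ih =>
    have hal : ∀ z ∈ l, a < z := fun z hz => (List.pairwise_cons.mp hl).1 z hz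
    have ih' := ih (List.pairwise_cons.mp hl).2
    by_cases hpa : p a
    · by_cases hat : a.val < t
      · rw [List.filter_cons_of_pos (by simp [hpa]),
          List.filter_cons_of_pos (by simp [hpa, hat]),
          List.filter_cons_of_neg (by simp [hpa]; omega), List.cons_append, ih']
      · rw [List.filter_cons_of_pos (by simp [hpa]),
          List.filter_cons_of_neg (by simp [hpa, hat]),
          List.filter_cons_of_pos (by simp [hpa]; omega)]
        have h1 : l.filter (fun z => p z ∧ z.val < t) = [] := by
          apply List.filter_eq_nil_iff.mpr
          intro z hz
          have := hal z hz
          simp only [Fin.lt_def] at this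
          simp
          intro _
          omega
        rw [ih', h1, List.nil_append]
        simp
    · rw [List.filter_cons_of_neg (by simp [hpa]),
        List.filter_cons_of_neg (by simp [hpa]),
        List.filter_cons_of_neg (by simp [hpa]), ih']

lemma filter_split' {n : ℕ} (P : Fin n → Prop) [DecidablePred P] (t : ℕ)
    (l : List (Fin n)) (hl : l.Pairwise (· < ·)) :
    (l.filter fun z => P z)
      = (l.filter fun z => P z ∧ z.val < t) ++ (l.filter fun z => P z ∧ t ≤ z.val) := by
  rw [filter_split (fun z => decide (P z)) t l hl]
  congr 1
  · apply List.filter_congr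
    intro z _
    simp
  · apply List.filter_congr
    intro z _
    simp

lemma filter_eq_singleton {n : ℕ} (p : Fin n → Bool) (a : Fin n) :
    ∀ (l : List (Fin n)), l.Pairwise (· < ·) → a ∈ l → p a = true →
      (∀ z ∈ l, p z = true → z = a) → l.filter p = [a] := by
  intro l hl hal hpa huniq
  induction l with
  | nil => simp at hal
  | cons x l ih =>
    have hpw := List.pairwise_cons.mp hl
    by_cases hax : x = a
    · subst hax
      rw [List.filter_cons_of_pos (by simp [hpa])]
      congr 1
      apply List.filter_eq_nil_iff.mpr
      intro z hz hpz
      have h1 : z = x := huniq z (List.mem_cons_of_mem _ hz) hpz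
      have h2 : x < z := hpw.1 z hz
      rw [h1] at h2
      exact absurd h2 (lt_irrefl _)
    · have hmem : a ∈ l := by
        rcases List.mem_cons.mp hal with h' | h'
        · exact absurd h'.symm hax
        · exact h'
      rw [List.filter_cons_of_neg ?_]
      · exact ih hpw.2 hmem (fun z hz hpz => huniq z (List.mem_cons_of_mem _ hz) hpz)
      · simp only [Bool.not_eq_true]
        by_cases hpx : p x = true
        · exact absurd (huniq x List.mem_cons_self hpx) hax
        · simpa using hpx

lemma infix_reduced {a b c : List B} 
    (hred : cs.length (cs.wordProd (a ++ b ++ c)) = (a ++ b ++ c).length) :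
    cs.length (cs.wordProd b) = b.length := by
  have h1 : cs.length (cs.wordProd (a ++ b ++ c))
      ≤ cs.length (cs.wordProd a) + cs.length (cs.wordProd b) + cs.length (cs.wordProd c) := by
    rw [CoxeterSystem.wordProd_append, CoxeterSystem.wordProd_append]
    calc cs.length (cs.wordProd a * cs.wordProd b * cs.wordProd c)
        ≤ cs.length (cs.wordProd a * cs.wordProd b) + cs.length (cs.wordProd c) :=
          cs.length_mul_le _ _
      _ ≤ cs.length (cs.wordProd a) + cs.length (cs.wordProd b) + cs.length (cs.wordProd c) :=
          Nat.add_le_add_right (cs.length_mul_le _ _) _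
  have ha := cs.length_wordProd_le a
  have hb := cs.length_wordProd_le b
  have hc := cs.length_wordProd_le c
  rw [List.length_append, List.length_append] at hred
  omega

lemma facet_core (h : IsGeometricRep cs pi α) {Q : List B} {I J : Finset (Fin Q.length)}
    (hJr : IsReducedWord cs (complementWord Q J))
    {k : Fin Q.length} (hkI : k ∈ I) (hkJ : k ∉ J)
    (hmin : ∀ z : Fin Q.length, z.val < k.val → (z ∈ I ↔ z ∈ J))
    (hconf : rootConf cs pi α Q I = rootConf cs pi α Q J) : False := by
  classical
  have hFpw : (List.finRange Q.length).Pairwise (· < ·) := List.pairwise_lt_finRange _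
  -- prefix sigmas agree
  have hsig : ∀ t : ℕ, t ≤ (k:ℕ) → sigmaBefore cs Q I t = sigmaBefore cs Q J t := by
    intro t ht
    unfold sigmaBefore
    congr 1
    congr 1
    apply List.filter_congr
    intro z _
    simp only [decide_eq_decide]
    constructor
    · rintro ⟨hzI, hzt⟩
      exact ⟨fun hzJ => hzI ((hmin z (by omega)).mpr hzJ), hzt⟩
    · rintro ⟨hzJ, hzt⟩
      exact ⟨fun hzI => hzJ ((hmin z (by omega)).mp hzI), hzt⟩
  have hroot : ∀ i : Fin Q.length, (i:ℕ) ≤ (k:ℕ) →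
      rootFn cs pi α Q I i = rootFn cs pi α Q J i := by
    intro i hi
    unfold rootFn
    rw [hsig (i:ℕ) hi]
  -- multiset cancellation
  have hIJfilter : Multiset.filter (fun z : Fin Q.length => (z:ℕ) < (k:ℕ)) I.val
      = Multiset.filter (fun z : Fin Q.length => (z:ℕ) < (k:ℕ)) J.val := by
    have hfin : Finset.filter (fun z : Fin Q.length => (z:ℕ) < (k:ℕ)) I
        = Finset.filter (fun z : Fin Q.length => (z:ℕ) < (k:ℕ)) J := by
      apply Finset.ext
      intro z
      simp only [Finset.mem_filter]
      constructor
      · rintro ⟨hzI, hzk⟩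
        exact ⟨(hmin z hzk).mp hzI, hzk⟩
      · rintro ⟨hzJ, hzk⟩
        exact ⟨(hmin z hzk).mpr hzJ, hzk⟩
    calc Multiset.filter (fun z : Fin Q.length => (z:ℕ) < (k:ℕ)) I.val
        = (Finset.filter (fun z : Fin Q.length => (z:ℕ) < (k:ℕ)) I).val :=
          (Finset.filter_val _ _).symm
      _ = (Finset.filter (fun z : Fin Q.length => (z:ℕ) < (k:ℕ)) J).val := by rw [hfin]
      _ = Multiset.filter (fun z : Fin Q.length => (z:ℕ) < (k:ℕ)) J.val :=
          Finset.filter_val _ _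
  have hsplitI : rootConf cs pi α Q I
      = (Multiset.filter (fun z : Fin Q.length => (z:ℕ) < (k:ℕ)) I.val).map
          (fun i => rootFn cs pi α Q I i)
        + (Multiset.filter (fun z : Fin Q.length => ¬ (z:ℕ) < (k:ℕ)) I.val).map
          (fun i => rootFn cs pi α Q I i) := by
    unfold rootConf
    rw [← Multiset.map_add, Multiset.filter_add_not]
  have hsplitJ : rootConf cs pi α Q J
      = (Multiset.filter (fun z : Fin Q.length => (z:ℕ) < (k:ℕ)) J.val).map
          (fun i => rootFn cs pi α Q J i)
        + (Multiset.filter (fun z : Fin Q.length => ¬ (z:ℕ) < (k:ℕ)) J.val).map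
          (fun i => rootFn cs pi α Q J i) := by
    unfold rootConf
    rw [← Multiset.map_add, Multiset.filter_add_not]
  have hlow : (Multiset.filter (fun z : Fin Q.length => (z:ℕ) < (k:ℕ)) I.val).map
          (fun i => rootFn cs pi α Q I i)
      = (Multiset.filter (fun z : Fin Q.length => (z:ℕ) < (k:ℕ)) J.val).map
          (fun i => rootFn cs pi α Q J i) := by
    rw [hIJfilter]
    apply Multiset.map_congr rfl
    intro z hz
    exact hroot z (by have := (Multiset.mem_filter.mp hz).2; omega)
  have hcancel : (Multiset.filter (fun z : Fin Q.length => ¬ (z:ℕ) < (k:ℕ)) I.val).map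
          (fun i => rootFn cs pi α Q I i)
      = (Multiset.filter (fun z : Fin Q.length => ¬ (z:ℕ) < (k:ℕ)) J.val).map
          (fun i => rootFn cs pi α Q J i) := by
    have hc := hconf
    rw [hsplitI, hsplitJ, hlow] at hc
    exact add_left_cancel hc
  have hkmem : rootFn cs pi α Q I k
      ∈ (Multiset.filter (fun z : Fin Q.length => ¬ (z:ℕ) < (k:ℕ)) J.val).map
          (fun i => rootFn cs pi α Q J i) := by
    rw [← hcancel]
    apply Multiset.mem_map_of_mem
    rw [Multiset.mem_filter]
    exact ⟨Finset.mem_val.mpr hkI, by omega⟩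
  obtain ⟨j, hjmem, hjeq⟩ := Multiset.mem_map.mp hkmem
  have hjJ : j ∈ J := Finset.mem_val.mp (Multiset.mem_filter.mp hjmem).1
  have hjk : (k:ℕ) < (j:ℕ) := by
    have h1 : ¬ (j:ℕ) < (k:ℕ) := (Multiset.mem_filter.mp hjmem).2
    have h2 : (j:ℕ) ≠ (k:ℕ) := by
      intro hh
      exact hkJ ((Fin.ext hh : j = k) ▸ hjJ)
    omega
  have hjj : rootFn cs pi α Q J j = rootFn cs pi α Q J k := by
    rw [hjeq, hroot k le_rfl]
  -- decompose the complement word of J around positions k and j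
  have hd1 : (List.finRange Q.length).filter (fun z => z ∉ J ∧ (z:ℕ) < (j:ℕ))
      = (List.finRange Q.length).filter (fun z => z ∉ J ∧ (z:ℕ) < (k:ℕ))
        ++ (List.finRange Q.length).filter
            (fun z => z ∉ J ∧ (k:ℕ) ≤ (z:ℕ) ∧ (z:ℕ) < (j:ℕ)) := by
    rw [filter_split' (fun z => z ∉ J ∧ (z:ℕ) < (j:ℕ)) (k:ℕ) _ hFpw]
    congr 1
    · apply List.filter_congr
      intro z _
      simp only [decide_eq_decide]
      constructor
      · rintro ⟨⟨h1, _⟩, h3⟩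
        exact ⟨h1, h3⟩
      · rintro ⟨h1, h3⟩
        exact ⟨⟨h1, by omega⟩, h3⟩
    · apply List.filter_congr
      intro z _
      simp only [decide_eq_decide]
      constructor
      · rintro ⟨⟨h1, h2⟩, h3⟩
        exact ⟨h1, h3, h2⟩
      · rintro ⟨h1, h3, h2⟩
        exact ⟨⟨h1, h2⟩, h3⟩
  have hd2 : (List.finRange Q.length).filter
        (fun z => z ∉ J ∧ (k:ℕ) ≤ (z:ℕ) ∧ (z:ℕ) < (j:ℕ))
      = k :: (List.finRange Q.length).filter
          (fun z => z ∉ J ∧ (k:ℕ) < (z:ℕ) ∧ (z:ℕ) < (j:ℕ)) := by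
    rw [filter_split' (fun z => z ∉ J ∧ (k:ℕ) ≤ (z:ℕ) ∧ (z:ℕ) < (j:ℕ)) ((k:ℕ)+1) _ hFpw]
    have hone : (List.finRange Q.length).filter
        (fun z => (z ∉ J ∧ (k:ℕ) ≤ (z:ℕ) ∧ (z:ℕ) < (j:ℕ)) ∧ (z:ℕ) < (k:ℕ)+1) = [k] := by
      apply filter_eq_singleton _ k _ hFpw (List.mem_finRange k)
      · simp only [decide_eq_true_eq]
        exact ⟨⟨hkJ, le_rfl, hjk⟩, by omega⟩
      · intro z _ hz
        simp only [decide_eq_true_eq] at hz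
        apply Fin.ext
        omega
    rw [hone]
    rw [List.singleton_append]
    congr 1
    apply List.filter_congr
    intro z _
    simp only [decide_eq_decide]
    constructor
    · rintro ⟨⟨h1, h2, h3⟩, h4⟩
      exact ⟨h1, by omega, h3⟩
    · rintro ⟨h1, h2, h3⟩
      exact ⟨⟨h1, by omega, h3⟩, by omega⟩
  have hd3 : (List.finRange Q.length).filter (fun z => z ∉ J)
      = (List.finRange Q.length).filter (fun z => z ∉ J ∧ (z:ℕ) < (j:ℕ))
        ++ (List.finRange Q.length).filter (fun z => z ∉ J ∧ (j:ℕ) ≤ (z:ℕ)) := by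
    exact filter_split' (fun z => z ∉ J) (j:ℕ) _ hFpw
  set Dlist := (List.finRange Q.length).filter
      (fun z => z ∉ J ∧ (k:ℕ) < (z:ℕ) ∧ (z:ℕ) < (j:ℕ)) with hD_def
  set Dmap := Dlist.map Q.get with hDmap_def
  set qk := Q.get k with hqk_def
  set qj := Q.get j with hqj_def
  -- sigmaBefore J j in product form
  have he1 : sigmaBefore cs Q J (j:ℕ)
      = sigmaBefore cs Q J (k:ℕ) * (cs.simple qk * cs.wordProd Dmap) := by
    show cs.wordProd _ = _
    rw [show ((List.finRange Q.length).filter (fun z => z ∉ J ∧ (z:ℕ) < (j:ℕ))).map Q.get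
        = (((List.finRange Q.length).filter (fun z => z ∉ J ∧ (z:ℕ) < (k:ℕ))).map Q.get)
          ++ (qk :: Dmap) by
      rw [hd1, hd2, List.map_append, List.map_cons]]
    rw [CoxeterSystem.wordProd_append, CoxeterSystem.wordProd_cons]
    rfl
  -- the root equation
  have hrooteq : pi (cs.wordProd Dmap) (α qj) = -(α qk) := by
    have hss : ∀ x : V, pi (cs.simple qk) (pi (cs.simple qk) x) = x := by
      intro x
      calc pi (cs.simple qk) (pi (cs.simple qk) x)
          = pi (cs.simple qk * cs.simple qk) x := by rw [map_mul]; rfl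
        _ = x := by rw [cs.simple_mul_simple_self, map_one]; rfl
    have h1 : pi (sigmaBefore cs Q J (k:ℕ))
          (pi (cs.simple qk) (pi (cs.wordProd Dmap) (α qj)))
        = pi (sigmaBefore cs Q J (k:ℕ)) (α qk) := by
      have := hjj
      unfold rootFn at this
      rw [he1, map_mul, map_mul] at this
      exact this
    have h2 : pi (cs.simple qk) (pi (cs.wordProd Dmap) (α qj)) = α qk :=
      (pi (sigmaBefore cs Q J (k:ℕ))).injective h1
    calc pi (cs.wordProd Dmap) (α qj)
        = pi (cs.simple qk) (pi (cs.simple qk) (pi (cs.wordProd Dmap) (α qj))) :=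
          (hss _).symm
      _ = pi (cs.simple qk) (α qk) := by rw [h2]
      _ = -(α qk) := pi_simple_self h qk
  -- the conjugation relation
  have hconj : cs.wordProd Dmap * cs.simple qj = cs.simple qk * cs.wordProd Dmap :=
    conj_eq h hrooteq
  -- reducedness of the middle segment
  have hmidred : cs.length (cs.wordProd (qk :: Dmap)) = Dmap.length + 1 := by
    have hcw : complementWord Q J
        = (((List.finRange Q.length).filter (fun z => z ∉ J ∧ (z:ℕ) < (k:ℕ))).map Q.get)
          ++ (qk :: Dmap)
          ++ (((List.finRange Q.length).filter
              (fun z => z ∉ J ∧ (j:ℕ) ≤ (z:ℕ))).map Q.get) := by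
      unfold complementWord
      rw [hd3, hd1, hd2, List.map_append, List.map_append, List.map_cons]
    have hred := hJr
    unfold IsReducedWord at hred
    rw [hcw] at hred
    have := infix_reduced (cs := cs) hred
    simpa using this
  have hDred : cs.length (cs.wordProd Dmap) = Dmap.length := by
    have h1 : cs.length (cs.wordProd (qk :: Dmap))
        = cs.length (cs.simple qk * cs.wordProd Dmap) := by
      rw [CoxeterSystem.wordProd_cons]
    have h2 := cs.length_wordProd_le Dmap
    rcases cs.length_simple_mul (cs.wordProd Dmap) qk with h' | h' <;> omega
  -- conclude via positivity
  have hasc : cs.length (cs.wordProd Dmap * cs.simple qj)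
      = cs.length (cs.wordProd Dmap) + 1 := by
    rw [hconj]
    have h1 : cs.length (cs.wordProd (qk :: Dmap))
        = cs.length (cs.simple qk * cs.wordProd Dmap) := by
      rw [CoxeterSystem.wordProd_cons]
    omega
  have hpos := ascent_isPos h (cs.wordProd Dmap) qj hasc
  rw [hrooteq] at hpos
  exact not_isPos_neg h (h.root_ne_zero qk) (isPos_simple qk) hpos

end Aux

/-- The root configuration, as a multiset, characterizes a facet among all facets of the
spherical subword complex: two distinct facets have distinct root configurations. -/
theorem rootConf_injective [Finite W] (h : IsGeometricRep cs pi α)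
    (w0 : W) (hw0 : ∀ w : W, cs.length w ≤ cs.length w0)
    (Q : List B) (hdem : demazure cs Q = w0)
    (I J : Finset (Fin Q.length)) (hI : IsFacet cs w0 Q I) (hJ : IsFacet cs w0 Q J)
    (hconf : rootConf cs pi α Q I = rootConf cs pi α Q J) :
    I = J := by
  by_contra hne
  have hS : ((I \ J) ∪ (J \ I)).Nonempty := by
    rcases Finset.eq_empty_or_nonempty ((I \ J) ∪ (J \ I)) with hemp | hne'
    · exfalso
      apply hne
      apply Finset.ext
      intro z
      constructor
      · intro hz
        by_contra hz2
        have hmem : z ∈ (I \ J) ∪ (J \ I) :=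
          Finset.mem_union_left _ (Finset.mem_sdiff.mpr ⟨hz, hz2⟩)
        rw [hemp] at hmem
        exact absurd hmem (Finset.notMem_empty z)
      · intro hz
        by_contra hz2
        have hmem : z ∈ (I \ J) ∪ (J \ I) :=
          Finset.mem_union_right _ (Finset.mem_sdiff.mpr ⟨hz, hz2⟩)
        rw [hemp] at hmem
        exact absurd hmem (Finset.notMem_empty z)
    · exact hne'
  set k := ((I \ J) ∪ (J \ I)).min' hS with hk_def
  have hkS : k ∈ (I \ J) ∪ (J \ I) := Finset.min'_mem _ _
  have hmin : ∀ z : Fin Q.length, z.val < k.val → (z ∈ I ↔ z ∈ J) := by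
    intro z hz
    by_contra hz2
    have hzS : z ∈ (I \ J) ∪ (J \ I) := by
      by_cases hzI : z ∈ I
      · exact Finset.mem_union_left _ (Finset.mem_sdiff.mpr ⟨hzI, fun hzJ => hz2 ⟨fun _ => hzJ, fun _ => hzI⟩⟩)
      · by_cases hzJ : z ∈ J
        · exact Finset.mem_union_right _ (Finset.mem_sdiff.mpr ⟨hzJ, hzI⟩)
        · exact absurd ⟨fun hh => absurd hh hzI, fun hh => absurd hh hzJ⟩ hz2
    have hle := Finset.min'_le _ z hzS
    rw [← hk_def] at hle
    have : k.val ≤ z.val := hle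
    omega
  rcases Finset.mem_union.mp hkS with hk1 | hk2
  · obtain ⟨hkI, hkJ⟩ := Finset.mem_sdiff.mp hk1
    exact (facet_core h hJ.1 hkI hkJ hmin hconf).elim
  · obtain ⟨hkJ, hkI⟩ := Finset.mem_sdiff.mp hk2
    exact (facet_core h hI.1 hkJ hkI (fun z hz => (hmin z hz).symm) hconf.symm).elim

end SubwordBrick
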